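/- For every m ∈ ℕ, every eigenvalue of the (m+1)×(m+1) principal finite section M(0:m,0:m) of the mass matrix M is strictly greater than 1/(2(m+1)(m+2)); equivalently, the real symmetric matrix M(0:m,0:m) − (1/(2(m+1)(m+2)))·I is positive definite. In particular every principal finite section of M is positive definite. -/

import Mathlib

/-- The symmetric pentadiagonal mass matrix `M` with
`M(n,n) = 2(n+1)(n+2)/((2n+1)(2n+5))` and
`M(n,n+2) = M(n+2,n) = -√((n+1)(n+2)(n+3)(n+4)/((2n+3)(2n+5)²(2n+7)))`. -/
noncomputable def Mmat (i j : ℕ) : ℝ :=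
  if i = j then 2 * ((i : ℝ) + 1) * ((i : ℝ) + 2) / ((2 * (i : ℝ) + 1) * (2 * (i : ℝ) + 5))
  else if i + 2 = j then
    -Real.sqrt (((i : ℝ) + 1) * ((i : ℝ) + 2) * ((i : ℝ) + 3) * ((i : ℝ) + 4) /
      ((2 * (i : ℝ) + 3) * (2 * (i : ℝ) + 5) ^ 2 * (2 * (i : ℝ) + 7)))
  else if j + 2 = i then
    -Real.sqrt (((j : ℝ) + 1) * ((j : ℝ) + 2) * ((j : ℝ) + 3) * ((j : ℝ) + 4) /
      ((2 * (j : ℝ) + 3) * (2 * (j : ℝ) + 5) ^ 2 * (2 * (j : ℝ) + 7)))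
  else 0

/-- The `(m+1) × (m+1)` principal finite section `M(0:m,0:m)` of the mass matrix. -/
noncomputable def Msec (m : ℕ) : Matrix (Fin (m + 1)) (Fin (m + 1)) ℝ :=
  Matrix.of fun i j => Mmat (i : ℕ) (j : ℕ)

/-!
Gershgorin's theorem: every eigenvalue of `M(0:m,0:m)` exceeds `M(n,n) - Σ_{j ≠ n} |M(n,j)|` for
some row `n ≤ m`, and for a symmetric matrix positive eigenvalues mean positive definiteness.
Row `n` has at most two off-diagonal entries, `M(n,n+2)` and `M(n-2,n)`; bounding each square
root by the arithmetic mean of its two rational factors, the margin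
`M(n,n) - Σ_{j ≠ n} |M(n,j)|` is at least an explicit rational function of `n` which exceeds
`1/(2(n+1)(n+2)) ≥ 1/(2(m+1)(m+2))`: cleared of denominators, the difference is a polynomial
with positive coefficients.
-/

open Finset

lemma Fin.sum_univ_ite_val_eq_le {N c : ℕ} {f : ℕ → ℝ} (hf : 0 ≤ f c) :
    ∑ j : Fin N, (if (j : ℕ) = c then f j else 0) ≤ f c := by
  rw [Fin.sum_univ_eq_sum_range (fun j => if j = c then f j else 0), sum_ite_eq']
  split_ifs <;> simp [hf]

section Gershgorin

variable {n : Type*} [Fintype n] [DecidableEq n] {A : Matrix n n ℝ}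

theorem Matrix.lt_of_hasEigenvalue_of_forall_add_sum_lt {c μ : ℝ}
    (h : ∀ k, c + ∑ j ∈ univ.erase k, ‖A k j‖ < A k k)
    (hμ : Module.End.HasEigenvalue (Matrix.toLin' A) μ) : c < μ := by
  obtain ⟨k, hk⟩ := eigenvalue_mem_ball hμ
  rw [Metric.mem_closedBall, Real.dist_eq] at hk
  linarith [neg_abs_le (μ - A k k), h k]

theorem Matrix.IsHermitian.posDef_of_forall_sum_lt (hA : A.IsHermitian)
    (h : ∀ k, ∑ j ∈ univ.erase k, ‖A k j‖ < A k k) : A.PosDef := by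
  refine hA.posDef_iff_eigenvalues_pos.mpr fun i =>
    Matrix.lt_of_hasEigenvalue_of_forall_add_sum_lt (c := 0) (by simpa using h) ?_
  rw [Module.End.hasEigenvalue_iff_mem_spectrum, Matrix.spectrum_toLin']
  exact hA.eigenvalues_mem_spectrum_real i

theorem Matrix.IsHermitian.posDef_sub_smul_one_of_forall_add_sum_lt (hA : A.IsHermitian) {c : ℝ}
    (h : ∀ k, c + ∑ j ∈ univ.erase k, ‖A k j‖ < A k k) : (A - c • 1).PosDef := by
  have hAc : (A - c • 1).IsHermitian :=
    hA.sub (Matrix.isHermitian_one.smul (IsSelfAdjoint.all c))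
  refine hAc.posDef_of_forall_sum_lt fun k => ?_
  have hoff : ∑ j ∈ univ.erase k, ‖(A - c • 1) k j‖ = ∑ j ∈ univ.erase k, ‖A k j‖ :=
    sum_congr rfl fun j hj => by simp [Matrix.one_apply_ne' (ne_of_mem_erase hj)]
  rw [hoff]
  simp only [Matrix.sub_apply, Matrix.smul_apply, Matrix.one_apply_eq, smul_eq_mul, mul_one]
  linarith [h k]

end Gershgorin

noncomputable section

def massDiag (x : ℝ) : ℝ := 2 * (x + 1) * (x + 2) / ((2 * x + 1) * (2 * x + 5))

def massOffDiag (x : ℝ) : ℝ :=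
  √((x + 1) * (x + 2) * (x + 3) * (x + 4) / ((2 * x + 3) * (2 * x + 5) ^ 2 * (2 * x + 7)))

-- `massOffDiag x = √(p x * q x)` with `p, q` the two summands below, so this is AM-GM.
def massOffDiagBound (x : ℝ) : ℝ :=
  ((x + 1) * (x + 2) / ((2 * x + 3) * (2 * x + 5)) +
    (x + 3) * (x + 4) / ((2 * x + 5) * (2 * x + 7))) / 2

end

lemma Real.sqrt_mul_le_add_div_two {a b : ℝ} (ha : 0 ≤ a) (hb : 0 ≤ b) :
    √(a * b) ≤ (a + b) / 2 :=
  Real.sqrt_le_iff.mpr ⟨by positivity, by nlinarith [sq_nonneg (a - b)]⟩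

lemma massOffDiag_nonneg (x : ℝ) : 0 ≤ massOffDiag x := Real.sqrt_nonneg _

lemma massOffDiag_le_bound {x : ℝ} (hx : 0 ≤ x) : massOffDiag x ≤ massOffDiagBound x := by
  have hpq : (x + 1) * (x + 2) * (x + 3) * (x + 4) / ((2 * x + 3) * (2 * x + 5) ^ 2 * (2 * x + 7))
      = (x + 1) * (x + 2) / ((2 * x + 3) * (2 * x + 5)) *
        ((x + 3) * (x + 4) / ((2 * x + 5) * (2 * x + 7))) := by
    field_simp
  rw [massOffDiag, hpq]
  exact Real.sqrt_mul_le_add_div_two (by positivity) (by positivity)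

lemma one_div_add_massOffDiagBound_lt_massDiag {x : ℝ} (hx : 0 ≤ x) :
    1 / (2 * (x + 1) * (x + 2)) + massOffDiagBound x < massDiag x := by
  rw [← sub_pos]
  have hdiff : massDiag x - (1 / (2 * (x + 1) * (x + 2)) + massOffDiagBound x)
      = (8*x^6 + 88*x^5 + 378*x^4 + 800*x^3 + 872*x^2 + 486*x + 131) /
        (2 * (x+1) * (x+2) * (2*x+1) * (2*x+3) * (2*x+5) * (2*x+7)) := by
    unfold massDiag massOffDiagBound
    field_simp
    ring
  rw [hdiff]
  positivity

lemma one_div_add_massOffDiagBound_add_two_lt_massDiag {y : ℝ} (hy : 0 ≤ y) :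
    1 / (2 * (y + 2 + 1) * (y + 2 + 2)) + (massOffDiagBound y + massOffDiagBound (y + 2))
      < massDiag (y + 2) := by
  rw [← sub_pos]
  have hdiff : massDiag (y + 2) -
        (1 / (2 * (y + 2 + 1) * (y + 2 + 2)) + (massOffDiagBound y + massOffDiagBound (y + 2)))
      = (48*(y+2)^3 + 216*(y+2)^2 + 222*(y+2) + 9) /
        (2 * (y+3) * (y+4) * (2*y+3) * (2*y+5) * (2*y+7) * (2*y+9) * (2*y+11)) := by
    unfold massDiag massOffDiagBound
    field_simp
    ring
  rw [hdiff]
  positivity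

lemma Mmat_comm (i j : ℕ) : Mmat i j = Mmat j i := by
  unfold Mmat
  split_ifs <;> first | rfl | omega | (subst_vars; rfl)

lemma Msec_isHermitian (m : ℕ) : (Msec m).IsHermitian :=
  Matrix.IsHermitian.ext fun i j => Mmat_comm j i

lemma Msec_apply_self (m : ℕ) (k : Fin (m + 1)) : Msec m k k = massDiag k := by
  simp [Msec, Mmat, massDiag]

lemma abs_Mmat_le_of_ne {n j : ℕ} (hne : n ≠ j) :
    |Mmat n j| ≤
      (if j = n + 2 then massOffDiag n else 0) + if j + 2 = n then massOffDiag j else 0 := by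
  unfold Mmat
  split_ifs <;> first | omega | simp [massOffDiag, abs_of_nonneg (Real.sqrt_nonneg _)]

lemma sum_abs_Msec_row_le (m : ℕ) (k : Fin (m + 1)) :
    ∑ j ∈ univ.erase k, ‖Msec m k j‖ ≤
      ∑ j : Fin (m + 1), ((if (j : ℕ) = k + 2 then massOffDiag k else 0) +
        if (j : ℕ) + 2 = k then massOffDiag j else 0) := by
  refine (sum_le_sum fun j hj => ?_).trans
    (sum_le_sum_of_subset_of_nonneg (erase_subset _ _) fun j _ _ => ?_)
  · exact abs_Mmat_le_of_ne (Fin.val_ne_of_ne (ne_of_mem_erase hj).symm)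
  · have := massOffDiag_nonneg k
    have := massOffDiag_nonneg j
    positivity

lemma add_sum_abs_Msec_row_lt (m : ℕ) (k : Fin (m + 1)) :
    1 / (2 * ((m : ℝ) + 1) * ((m : ℝ) + 2)) + ∑ j ∈ univ.erase k, ‖Msec m k j‖ <
      Msec m k k := by
  have hkm : ((k : ℕ) : ℝ) ≤ m := by exact_mod_cast Nat.lt_succ_iff.mp k.isLt
  have hmk : 1 / (2 * ((m : ℝ) + 1) * ((m : ℝ) + 2)) ≤
      1 / (2 * ((k : ℝ) + 1) * ((k : ℝ) + 2)) := by
    gcongr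
  have hrow := sum_abs_Msec_row_le m k
  rw [sum_add_distrib] at hrow
  have hup :
      ∑ j : Fin (m + 1), (if (j : ℕ) = k + 2 then massOffDiag k else 0) ≤ massOffDiag k :=
    Fin.sum_univ_ite_val_eq_le (f := fun _ => massOffDiag k) (massOffDiag_nonneg _)
  have hkk := massOffDiag_le_bound (Nat.cast_nonneg' (k : ℕ))
  rw [Msec_apply_self]
  rcases Nat.lt_or_ge (k : ℕ) 2 with hk | hk
  · have hlow : ∑ j : Fin (m + 1), (if (j : ℕ) + 2 = k then massOffDiag j else 0) = 0 :=
      sum_eq_zero fun j _ => if_neg (by omega)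
    linarith [one_div_add_massOffDiagBound_lt_massDiag (Nat.cast_nonneg' (k : ℕ))]
  · obtain ⟨i, hi⟩ := Nat.exists_eq_add_of_le' hk
    have hlow : ∑ j : Fin (m + 1), (if (j : ℕ) + 2 = k then massOffDiag j else 0) ≤
        massOffDiag i := by
      simp only [hi, add_left_inj]
      exact Fin.sum_univ_ite_val_eq_le (f := fun j : ℕ => massOffDiag j) (massOffDiag_nonneg _)
    have hk : ((k : ℕ) : ℝ) = i + 2 := by rw [hi]; push_cast; ring
    have key := one_div_add_massOffDiagBound_add_two_lt_massDiag (Nat.cast_nonneg' i)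
    rw [← hk] at key
    linarith [massOffDiag_le_bound (Nat.cast_nonneg' i)]

theorem mass_section_eigenvalue_lower_bound (m : ℕ) :
    (∀ μ : ℝ, Module.End.HasEigenvalue (Matrix.toLin' (Msec m)) μ →
      1 / (2 * ((m : ℝ) + 1) * ((m : ℝ) + 2)) < μ) ∧
    Matrix.PosDef (Msec m - (1 / (2 * ((m : ℝ) + 1) * ((m : ℝ) + 2))) • (1 : Matrix (Fin (m + 1)) (Fin (m + 1)) ℝ)) ∧
    Matrix.PosDef (Msec m) := by
  have hrow := add_sum_abs_Msec_row_lt m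
  have hpos : 0 < 1 / (2 * ((m : ℝ) + 1) * ((m : ℝ) + 2)) := by positivity
  refine ⟨fun μ hμ => Matrix.lt_of_hasEigenvalue_of_forall_add_sum_lt hrow hμ,
    (Msec_isHermitian m).posDef_sub_smul_one_of_forall_add_sum_lt hrow,
    (Msec_isHermitian m).posDef_of_forall_sum_lt fun k => ?_⟩
  linarith [hrow k]
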